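/- arXiv:math/0305345 — 4 statements merged into one kernel-verified Lean document; each statement's English description precedes it below -/
import Mathlib

section
/- Let $m, n \ge 1$ and let $j_1, \ldots, j_m$ be non-negative integers with $j_1 + \cdots + j_m = n$. Let $J \subseteq \{1, \ldots, n\}$ and for $1 \le k \le m$ set $\hat j_k = \left|J \cap \{j_1 + \cdots + j_{k-1} + 1, \ldots, j_1 + \cdots + j_k\}\right|$. Then $\sum_{k=1}^{m} \; \sum_{\ell = j_1 + \cdots + j_{k-1} + 1}^{j_1 + \cdots + j_k} \Big( \hat j_1 + \cdots + \hat j_k - \left|J \cap \{1, \ldots, \ell\}\right| \Big) \;=\; \sum_{\ell=2}^{n} \left|J \cap \{\ell, \ldots, n\}\right| \;-\; \sum_{k=2}^{m} (j_1 + \cdots + j_{k-1})\,\hat j_k.$ -/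
open Finset

/-- The combinatorial identity from Section 8 computing the degree of the
equivariant Chern polynomial of the skyscraper sheaf comparing the full-flag
and partial-flag parabolic homomorphisms. -/
theorem stmt_1 (m n : ℕ) (hm : 1 ≤ m) (hn : 1 ≤ n)
    (j : ℕ → ℕ) (hsum : ∑ k ∈ Icc 1 m, j k = n)
    (J : Finset ℕ) (hJ : J ⊆ Icc 1 n)
    (s : ℕ → ℕ) (hs : ∀ k, s k = ∑ i ∈ Icc 1 k, j i)
    (jh : ℕ → ℕ)
    (hjh : ∀ k, jh k = (J ∩ Icc (s (k - 1) + 1) (s k)).card) :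
    ∑ k ∈ Icc 1 m, ∑ l ∈ Icc (s (k - 1) + 1) (s k),
        ((∑ h ∈ Icc 1 k, (jh h : ℤ)) - ((J ∩ Icc 1 l).card : ℤ))
      = ∑ l ∈ Icc 2 n, ((J ∩ Icc l n).card : ℤ)
          - ∑ k ∈ Icc 2 m, (s (k - 1) : ℤ) * (jh k : ℤ) := by
  have hs0 : s 0 = 0 := by rw [hs]; simp
  have hmono : Monotone s := by
    intro a b hab
    rw [hs, hs]
    exact Finset.sum_le_sum_of_subset (Finset.Icc_subset_Icc_right hab)
  have hsm : s m = n := by rw [hs]; exact hsum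
  set f : ℕ → ℤ := fun l => ((J ∩ Ioc 0 l).card : ℤ) with hf
  have hIoc : ∀ a b : ℕ, Icc (a+1) b = Ioc a b := fun a b => Finset.Icc_add_one_left_eq_Ioc a b
  have hf0 : f 0 = 0 := by simp [hf]
  have hfIcc : ∀ l, ((J ∩ Icc 1 l).card : ℤ) = f l := by
    intro l
    have h1 : Icc 1 l = Ioc 0 l := hIoc 0 l
    simp only [hf, h1]
  have hfn : f n = (J.card : ℤ) := by
    have h1 : J ∩ Ioc 0 n = J := by
      rw [← hIoc 0 n]; exact Finset.inter_eq_left.mpr hJ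
    simp only [hf, h1]
  -- additivity of f over consecutive intervals
  have hadd : ∀ a b : ℕ, a ≤ b →
      f b = f a + ((J ∩ Ioc a b).card : ℤ) := by
    intro a b hab
    have hu : Ioc 0 a ∪ Ioc a b = Ioc 0 b :=
      Finset.Ioc_union_Ioc_eq_Ioc (Nat.zero_le a) hab
    have hd : Disjoint (J ∩ Ioc 0 a) (J ∩ Ioc a b) := by
      apply Finset.disjoint_left.mpr
      intro x hx hx'
      simp only [mem_inter, mem_Ioc] at hx hx'
      omega
    have h2 : (J ∩ Ioc 0 b) = (J ∩ Ioc 0 a) ∪ (J ∩ Ioc a b) := by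
      rw [← Finset.inter_union_distrib_left, hu]
    simp only [hf, h2, Finset.card_union_of_disjoint hd]
    push_cast
    ring
  have hjh' : ∀ k, (jh k : ℤ) = f (s k) - f (s (k - 1)) := by
    intro k
    have h1 := hadd (s (k-1)) (s k) (hmono (Nat.sub_le k 1))
    rw [hjh, hIoc]
    omega
  -- partial sums of jh
  have hpsum : ∀ k : ℕ, ∑ h ∈ Icc 1 k, (jh h : ℤ) = f (s k) := by
    intro k
    induction k with
    | zero => simp [hs0, hf0]
    | succ K ih =>
        rw [Finset.sum_Icc_succ_top (by omega), ih, hjh' (K+1)]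
        simp
  -- block partition of sums over Ioc 0 n
  have hsplit : ∀ (g : ℕ → ℤ) (K : ℕ),
      ∑ k ∈ Icc 1 K, ∑ l ∈ Ioc (s (k-1)) (s k), g l = ∑ l ∈ Ioc (s 0) (s K), g l := by
    intro g K
    induction K with
    | zero => simp
    | succ K ih =>
        rw [Finset.sum_Icc_succ_top (by omega), ih]
        have h1 : (K + 1 - 1) = K := by omega
        rw [h1, Finset.sum_Ioc_consecutive g (hmono (Nat.zero_le K)) (hmono (Nat.le_succ K))]
  -- telescoping
  have htel : ∀ (g : ℕ → ℤ) (K : ℕ), ∑ k ∈ Icc 1 K, (g k - g (k-1)) = g K - g 0 := by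
    intro g K
    induction K with
    | zero => simp
    | succ K ih =>
        rw [Finset.sum_Icc_succ_top (by omega), ih]
        have h1 : (K + 1 - 1) = K := by omega
        rw [h1]; ring
  -- rewrite LHS
  have hLHS : ∑ k ∈ Icc 1 m, ∑ l ∈ Icc (s (k - 1) + 1) (s k),
        ((∑ h ∈ Icc 1 k, (jh h : ℤ)) - ((J ∩ Icc 1 l).card : ℤ))
      = (∑ k ∈ Icc 1 m, ((s k : ℤ) - (s (k-1) : ℤ)) * f (s k)) - ∑ l ∈ Ioc 0 n, f l := by
    have step1 : ∀ k, ∑ l ∈ Icc (s (k - 1) + 1) (s k),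
        ((∑ h ∈ Icc 1 k, (jh h : ℤ)) - ((J ∩ Icc 1 l).card : ℤ))
        = ((s k : ℤ) - (s (k-1) : ℤ)) * f (s k) - ∑ l ∈ Ioc (s (k-1)) (s k), f l := by
      intro k
      rw [hIoc]
      simp only [hfIcc, hpsum]
      rw [Finset.sum_sub_distrib, Finset.sum_const, Nat.card_Ioc, nsmul_eq_mul]
      congr 1
      congr 1
      have h2 := hmono (Nat.sub_le k 1)
      push_cast [Nat.cast_sub h2]
      ring
    rw [Finset.sum_congr rfl (fun k _ => step1 k), Finset.sum_sub_distrib,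
      hsplit f m, hs0, hsm]
  rw [hLHS]
  -- rewrite RHS first sum
  have hrfirst : ∑ l ∈ Icc 2 n, ((J ∩ Icc l n).card : ℤ)
      = ∑ l ∈ Icc 1 (n-1), ((J.card : ℤ) - f l) := by
    rw [Finset.sum_nbij' (i := fun l => l - 1) (j := fun l => l + 1)]
    · intro a ha; simp only [mem_Icc] at ha ⊢; omega
    · intro a ha; simp only [mem_Icc] at ha ⊢; omega
    · intro a ha; simp only [mem_Icc] at ha; omega
    · intro a ha; simp only [mem_Icc] at ha; omega
    · intro l hl
      simp only [mem_Icc] at hl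
      have h2 : Icc l n = Ioc (l-1) n := by
        rw [← hIoc]; congr 1; omega
      have h3 := hadd (l-1) n (by omega)
      rw [h2]
      omega
  have hrfirst2 : ∑ l ∈ Icc 1 (n-1), ((J.card : ℤ) - f l)
      = (n : ℤ) * J.card - ∑ l ∈ Ioc 0 n, f l := by
    have h1 := Finset.sum_Icc_succ_top (a := 1) (b := n-1) (by omega)
      (fun l => ((J.card : ℤ) - f l))
    have hn' : n - 1 + 1 = n := by omega
    rw [hn'] at h1
    have h2 : ∑ l ∈ Icc 1 n, ((J.card : ℤ) - f l)
        = (n : ℤ) * J.card - ∑ l ∈ Icc 1 n, f l := by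
      rw [Finset.sum_sub_distrib, Finset.sum_const, Nat.card_Icc]
      simp only [nsmul_eq_mul]
      have h3 : (n + 1 - 1) = n := by omega
      rw [h3]
    have h3 : Icc 1 n = Ioc 0 n := hIoc 0 n
    rw [h3] at h1 h2
    simp only [hfn] at h1
    linarith [h1, h2]
  rw [hrfirst, hrfirst2]
  -- rewrite RHS second sum
  have hrsec : ∑ k ∈ Icc 2 m, (s (k - 1) : ℤ) * (jh k : ℤ)
      = ∑ k ∈ Icc 1 m, (s (k-1) : ℤ) * (f (s k) - f (s (k-1))) := by
    have h1 : Icc 1 m = insert 1 (Icc 2 m) := by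
      ext x; simp only [mem_insert, mem_Icc]; omega
    rw [h1, Finset.sum_insert (by simp)]
    simp only [hjh']
    simp [hs0, hf0]
  rw [hrsec]
  -- final telescoping identity
  have htel2 := htel (fun k => (s k : ℤ) * f (s k)) m
  simp only [hs0, hf0, hsm, hfn, Nat.cast_zero, mul_zero, zero_mul, sub_zero] at htel2
  have hcomb : ∑ k ∈ Icc 1 m, ((s k : ℤ) - (s (k-1) : ℤ)) * f (s k)
      + ∑ k ∈ Icc 1 m, (s (k-1) : ℤ) * (f (s k) - f (s (k-1)))
      = ∑ k ∈ Icc 1 m, ((s k : ℤ) * f (s k) - (s (k-1) : ℤ) * f (s (k-1))) := by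
    rw [← Finset.sum_add_distrib]
    exact Finset.sum_congr rfl (fun k _ => by ring)
  linarith [htel2, hcomb]
end

section
/- Fix integers $n \ge 2$, $d$, $m \ge 1$ and positive integers $j_1, \ldots, j_m$ with $j_1 + \cdots + j_m = n$. Let $\Delta = \{(\alpha_1, \ldots, \alpha_m) \in \mathbb{R}^m : 0 \le \alpha_1 < \alpha_2 < \cdots < \alpha_m < 1\}$, and let $S \subseteq \Delta$ be the set of those $(\alpha_1, \ldots, \alpha_m)$ for which there exist integers $\hat n, \hat d, \hat j_1, \ldots, \hat j_m$ with $0 < \hat n < n$, $0 \le \hat j_k \le j_k$ for all $k$, $\hat j_1 + \cdots + \hat j_m = \hat n$, and $(\hat d + \sum_{k=1}^m \alpha_k \hat j_k)/\hat n = (d + \sum_{k=1}^m \alpha_k j_k)/n$. If $\gcd(n, d, j_1, \ldots, j_m) = 1$, then $S$ is nowhere dense in $\Delta$. -/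
/-!
For a fixed candidate `(n̂, d̂, ĵ)`, equality of the two parabolic slopes is the affine equation
`∑ α_k (n ĵ_k - n̂ j_k) = n̂ d - n d̂` in `α`. It is never trivial: otherwise `ν = n̂ / n ∈ (0, 1)`
satisfies `ĵ = ν j` and `d̂ = ν d`, so the denominator `n / gcd(n, n̂) > 1` of `ν` divides `n`, `d`
and every `j_k`. On `Δ` one has `|d̂| ≤ |d| + 2 ∑ |j_k|`, so only finitely many candidates occur
and `S` lies in a finite union of affine hyperplanes. That union is nowhere dense in `ℝ^m`, hence
also in `Δ`, since the convex set `Δ` has nonempty interior and so lies in the closure of it.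
-/

open Finset

section NowhereDense

variable {X : Type*} [TopologicalSpace X]

lemma IsNowhereDense.union {s t : Set X} (hs : IsNowhereDense s) (ht : IsNowhereDense t) :
    IsNowhereDense (s ∪ t) := by
  rw [IsNowhereDense, closure_union,
    interior_union_isClosed_of_interior_empty isClosed_closure ht]
  exact hs

lemma isNowhereDense_biUnion_finset {ι : Type*} {F : Finset ι} {t : ι → Set X}
    (ht : ∀ i ∈ F, IsNowhereDense (t i)) : IsNowhereDense (⋃ i ∈ F, t i) := by
  classical
  induction F using Finset.induction_on with
  | empty => simp
  | insert a F _ ih =>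
    rw [Finset.set_biUnion_insert]
    exact (ht a (mem_insert_self a F)).union (ih fun i hi => ht i (mem_insert_of_mem hi))

lemma IsNowhereDense.preimage_val {s : Set X} (hs : s ⊆ closure (interior s)) {t : Set X}
    (ht : IsNowhereDense t) : IsNowhereDense (Subtype.val ⁻¹' t : Set s) := by
  refine Set.eq_empty_of_forall_notMem fun x hx => ?_
  obtain ⟨V, hVt, hV, hxV⟩ := mem_interior.1
    (interior_mono (continuous_subtype_val.closure_preimage_subset t) hx)
  obtain ⟨U, hU, rfl⟩ := isOpen_induced_iff.1 hV
  obtain ⟨y, hyU, hys⟩ := mem_closure_iff.1 (hs x.2) U hU hxV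
  have : y ∈ interior (closure t) :=
    interior_maximal (fun z hz => hVt (a := ⟨z, interior_subset hz.2⟩) hz.1)
      (hU.inter isOpen_interior) ⟨hyU, hys⟩
  rwa [ht] at this

end NowhereDense

lemma ContinuousLinearMap.interior_preimage_singleton_eq_empty {𝕜 M : Type*}
    [NontriviallyNormedField 𝕜] [AddCommGroup M] [TopologicalSpace M] [ContinuousAdd M]
    [Module 𝕜 M] [ContinuousSMul 𝕜 M] (f : StrongDual 𝕜 M) (hf : f ≠ 0) (r : 𝕜) :
    interior (f ⁻¹' {r}) = ∅ := by
  refine Set.subset_empty_iff.1 ?_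
  calc interior (f ⁻¹' {r}) ⊆ f ⁻¹' interior {r} :=
        (f.isOpenMap_of_ne_zero hf).interior_preimage_subset_preimage_interior
    _ = ∅ := by rw [interior_singleton, Set.preimage_empty]

lemma isNowhereDense_setOf_sum_mul_eq {ι : Type*} [Fintype ι] {c : ι → ℝ} {r : ℝ}
    (hcr : c ≠ 0 ∨ r ≠ 0) : IsNowhereDense {α : ι → ℝ | ∑ k, α k * c k = r} := by
  classical
  by_cases hc : c = 0
  · subst hc
    have hr : r ≠ 0 := hcr.resolve_left (not_not.2 rfl)
    simp [eq_comm, hr]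
  let f : StrongDual ℝ (ι → ℝ) := ∑ k, c k • ContinuousLinearMap.proj k
  have hf (α : ι → ℝ) : f α = ∑ k, α k * c k := by simp [f, mul_comm]
  have hf0 : f ≠ 0 := by
    obtain ⟨k, hk⟩ := Function.ne_iff.1 hc
    refine fun h => hk ?_
    simpa [hf, Pi.single_apply] using DFunLike.congr_fun h (Pi.single k 1)
  have hset : {α : ι → ℝ | ∑ k, α k * c k = r} = f ⁻¹' {r} := by ext α; simp [hf]
  rw [hset, (isClosed_singleton.preimage f.continuous).isNowhereDense_iff]
  exact f.interior_preimage_singleton_eq_empty hf0 r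

def weightChamber (m : ℕ) : Set (Fin m → ℝ) := {α | StrictMono α ∧ ∀ k, 0 ≤ α k ∧ α k < 1}

lemma add_mul_lt_add_mul_of_lt_of_lt {a b u v u' v' : ℝ} (ha : 0 ≤ a) (hb : 0 ≤ b)
    (hab : a + b = 1) (h : u < v) (h' : u' < v') : a * u + b * u' < a * v + b * v' := by
  rcases ha.eq_or_lt with rfl | ha
  · simp_all
  · nlinarith [mul_lt_mul_of_pos_left h ha, mul_le_mul_of_nonneg_left h'.le hb]

lemma convex_weightChamber (m : ℕ) : Convex ℝ (weightChamber m) := by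
  rintro x ⟨hx, hx01⟩ y ⟨hy, hy01⟩ a b ha hb hab
  refine ⟨fun i i' hii' => ?_, fun k => ⟨?_, ?_⟩⟩ <;>
    simp only [Pi.add_apply, Pi.smul_apply, smul_eq_mul]
  · exact add_mul_lt_add_mul_of_lt_of_lt ha hb hab (hx hii') (hy hii')
  · nlinarith [hx01 k, hy01 k]
  · simpa [hab] using add_mul_lt_add_mul_of_lt_of_lt ha hb hab (hx01 k).2 (hy01 k).2

lemma isOpen_setOf_strictMono_and_forall_pos_lt_one (m : ℕ) :
    IsOpen {α : Fin m → ℝ | StrictMono α ∧ ∀ k, 0 < α k ∧ α k < 1} := by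
  simp only [StrictMono, Set.ofPred_and, Set.ofPred_forall]
  refine .inter (isOpen_iInter_of_finite fun i => isOpen_iInter_of_finite fun i' =>
    isOpen_iInter_of_finite fun _ => isOpen_lt (continuous_apply i) (continuous_apply i'))
    (isOpen_iInter_of_finite fun k => .inter (isOpen_lt continuous_const (continuous_apply k))
      (isOpen_lt (continuous_apply k) continuous_const))

lemma interior_weightChamber_nonempty (m : ℕ) : (interior (weightChamber m)).Nonempty := by
  have hsub : {α : Fin m → ℝ | StrictMono α ∧ ∀ k, 0 < α k ∧ α k < 1} ⊆
      interior (weightChamber m) :=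
    interior_maximal (fun α hα => ⟨hα.1, fun k => ⟨(hα.2 k).1.le, (hα.2 k).2⟩⟩)
      (isOpen_setOf_strictMono_and_forall_pos_lt_one m)
  refine ⟨fun k => ((k : ℝ) + 1) / (m + 1), hsub ⟨fun i i' h => ?_, fun k => ?_⟩⟩
  · have : (i : ℝ) < i' := by exact_mod_cast h
    dsimp only
    gcongr
  · refine ⟨by positivity, ?_⟩
    rw [div_lt_one (by positivity)]
    exact_mod_cast Nat.succ_lt_succ k.isLt

lemma weightChamber_subset_closure_interior (m : ℕ) :
    weightChamber m ⊆ closure (interior (weightChamber m)) := by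
  rw [(convex_weightChamber m).closure_interior_eq_closure_of_nonempty_interior
    (interior_weightChamber_nonempty m)]
  exact subset_closure

lemma div_gcd_dvd_of_mul_eq_mul {R : Type*} [EuclideanDomain R] [GCDMonoid R] {a b x y : R}
    (ha : a ≠ 0) (h : a * x = b * y) : a / gcd a b ∣ y := by
  have hg : gcd a b ≠ 0 := gcd_ne_zero_of_left ha
  refine (isCoprime_div_gcd_div_gcd_of_gcd_ne_zero hg).dvd_of_dvd_mul_left ⟨x, ?_⟩
  apply mul_left_cancel₀ hg
  rw [← mul_assoc, ← mul_assoc, EuclideanDomain.mul_div_cancel' hg (gcd_dvd_left a b),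
    EuclideanDomain.mul_div_cancel' hg (gcd_dvd_right a b), h]

lemma exists_not_isUnit_common_dvd_of_mul_eq_mul {ι : Type*} {n d n' d' : ℤ} {j j' : ι → ℤ}
    (hn' : 0 < n') (hn'n : n' < n) (hd : n * d' = n' * d) (hj : ∀ k, n * j' k = n' * j k) :
    ∃ h : ℤ, ¬IsUnit h ∧ h ∣ n ∧ h ∣ d ∧ ∀ k, h ∣ j k := by
  have hn : n ≠ 0 := by omega
  refine ⟨n / gcd n n', fun hunit => ?_, EuclideanDomain.div_dvd_of_dvd (gcd_dvd_left n n'),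
    div_gcd_dvd_of_mul_eq_mul hn hd, fun k => div_gcd_dvd_of_mul_eq_mul hn (hj k)⟩
  have hg : gcd n n' * (n / gcd n n') = n :=
    EuclideanDomain.mul_div_cancel' (gcd_ne_zero_of_left hn) (gcd_dvd_left n n')
  have hg0 : 0 ≤ gcd n n' := by rw [← Int.coe_gcd]; positivity
  have hng : n ∣ n' := by
    rcases Int.isUnit_iff.1 hunit with h1 | h1 <;> rw [h1] at hg
    · rw [mul_one] at hg
      exact hg ▸ gcd_dvd_right n n'
    · omega
  exact absurd (Int.le_of_dvd hn' hng) (by omega)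

lemma abs_le_of_add_div_eq_add_div {x y a b p q : ℝ} (hp : 0 < p) (hpq : p ≤ q)
    (h : (x + a) / p = (y + b) / q) : |x| ≤ |y| + |b| + |a| := by
  have hq : 0 < q := hp.trans_le hpq
  have hx : x = p / q * (y + b) - a := by
    field_simp at h ⊢
    linarith
  calc |x| ≤ |p / q * (y + b)| + |a| := hx ▸ abs_sub _ _
    _ ≤ |y + b| + |a| := by
        rw [abs_mul, abs_of_pos (div_pos hp hq)]
        gcongr
        exact mul_le_of_le_one_left (abs_nonneg _) ((div_le_one hq).2 hpq)
    _ ≤ |y| + |b| + |a| := by gcongr; exact abs_add_le y b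

lemma abs_sum_mul_le_sum_abs {ι : Type*} (s : Finset ι) {α c : ι → ℝ}
    (hα : ∀ k ∈ s, |α k| ≤ 1) : |∑ k ∈ s, α k * c k| ≤ ∑ k ∈ s, |c k| :=
  (abs_sum_le_sum_abs _ _).trans <| sum_le_sum fun k hk => by
    rw [abs_mul]
    exact mul_le_of_le_one_left (abs_nonneg _) (hα k hk)

section SlopeWall

variable {ι : Type*} [Fintype ι]

lemma abs_le_of_div_eq_div {α : ι → ℝ} (hα : ∀ k, |α k| ≤ 1) {n d n' d' : ℤ} {j j' : ι → ℤ}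
    (hn' : 0 < n') (hn'n : n' ≤ n) (hj' : ∀ k, |j' k| ≤ |j k|)
    (h : ((d' : ℝ) + ∑ k, α k * j' k) / n' = ((d : ℝ) + ∑ k, α k * j k) / n) :
    |d'| ≤ |d| + 2 * ∑ k, |j k| := by
  have hsum' : |∑ k, α k * (j' k : ℝ)| ≤ ∑ k, |(j k : ℝ)| :=
    (abs_sum_mul_le_sum_abs _ fun k _ => hα k).trans
      (sum_le_sum fun k _ => by exact_mod_cast hj' k)
  have hsum : |∑ k, α k * (j k : ℝ)| ≤ ∑ k, |(j k : ℝ)| :=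
    abs_sum_mul_le_sum_abs _ fun k _ => hα k
  have hd' := abs_le_of_add_div_eq_add_div (by exact_mod_cast hn') (by exact_mod_cast hn'n) h
  have hR : |(d' : ℝ)| ≤ |(d : ℝ)| + 2 * ∑ k, |(j k : ℝ)| := by linarith
  exact_mod_cast hR

/-- For `p = (n̂, d̂, ĵ)` with `n, n̂ ≠ 0`, `α ∈ slopeWall n d j p` iff
`(d̂ + ∑ α_k ĵ_k) / n̂ = (d + ∑ α_k j_k) / n`. -/
def slopeWall (n d : ℤ) (j : ι → ℤ) (p : ℤ × ℤ × (ι → ℤ)) : Set (ι → ℝ) :=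
  {α | ∑ k, α k * ((n * p.2.2 k - p.1 * j k : ℤ) : ℝ) = ((p.1 * d - n * p.2.1 : ℤ) : ℝ)}

lemma mem_slopeWall_of_div_eq_div {α : ι → ℝ} {n d n' d' : ℤ} {j j' : ι → ℤ}
    (hn' : n' ≠ 0) (hn : n ≠ 0)
    (h : ((d' : ℝ) + ∑ k, α k * j' k) / n' = ((d : ℝ) + ∑ k, α k * j k) / n) :
    α ∈ slopeWall n d j (n', d', j') := by
  rw [div_eq_div_iff (by exact_mod_cast hn') (by exact_mod_cast hn)] at h
  simp only [slopeWall, Set.mem_ofPred_eq]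
  push_cast
  simp only [mul_sub, sum_sub_distrib, mul_left_comm _ (n : ℝ), mul_left_comm _ (n' : ℝ),
    ← mul_sum]
  linear_combination h

lemma isNowhereDense_slopeWall {n d : ℤ} {j : ι → ℤ}
    (hgcd : ∀ h : ℤ, h ∣ n → h ∣ d → (∀ k, h ∣ j k) → IsUnit h) {p : ℤ × ℤ × (ι → ℤ)}
    (hp : 0 < p.1) (hpn : p.1 < n) : IsNowhereDense (slopeWall n d j p) := by
  refine isNowhereDense_setOf_sum_mul_eq (not_and_or.1 fun ⟨hc, hr⟩ => ?_)
  have hd : n * p.2.1 = p.1 * d := by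
    have : p.1 * d - n * p.2.1 = 0 := by exact_mod_cast hr
    linarith
  have hj (k : ι) : n * p.2.2 k = p.1 * j k := by
    have : n * p.2.2 k - p.1 * j k = 0 := Int.cast_eq_zero.1 (congrFun hc k)
    linarith
  obtain ⟨h, hunit, hn, hd, hj⟩ := exists_not_isUnit_common_dvd_of_mul_eq_mul hp hpn hd hj
  exact hunit (hgcd h hn hd hj)

end SlopeWall

theorem stmt_3_general (n d : ℤ) (m : ℕ)
    (j : Fin m → ℤ)
    (hgcd : ∀ h : ℤ, h ∣ n → h ∣ d → (∀ k, h ∣ j k) → IsUnit h)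
    (Δ S : Set (Fin m → ℝ))
    (hΔ : Δ = {α | StrictMono α ∧ ∀ k, 0 ≤ α k ∧ α k < 1})
    (hS : S = {α ∈ Δ | ∃ (nh dh : ℤ) (jhat : Fin m → ℤ),
        0 < nh ∧ nh < n ∧ (∀ k, 0 ≤ jhat k ∧ jhat k ≤ j k) ∧
        (∑ k, jhat k) = nh ∧
        ((dh : ℝ) + ∑ k, α k * (jhat k : ℝ)) / (nh : ℝ)
          = ((d : ℝ) + ∑ k, α k * (j k : ℝ)) / (n : ℝ)}) :
    IsNowhereDense (Subtype.val ⁻¹' S : Set Δ) := by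
  classical
  subst hΔ
  set C := |d| + 2 * ∑ k, |j k|
  set F := Ioo 0 n ×ˢ Icc (-C) C ×ˢ Fintype.piFinset fun k => Icc 0 (j k)
  have hcover : S ⊆ ⋃ p ∈ F, slopeWall n d j p := by
    intro α hαS
    obtain ⟨hα, nh, dh, jhat, hnh, hnhn, hjhat, -, hslope⟩ := hS ▸ hαS
    have hα1 (k : Fin m) : |α k| ≤ 1 := abs_le.2 ⟨by linarith [(hα.2 k).1], (hα.2 k).2.le⟩
    have hdh := abs_le_of_div_eq_div hα1 hnh hnhn.le
      (fun k => abs_le_abs_of_nonneg (hjhat k).1 (hjhat k).2) hslope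
    refine Set.mem_biUnion (x := (nh, dh, jhat)) ?_
      (mem_slopeWall_of_div_eq_div hnh.ne' (hnh.trans hnhn).ne' hslope)
    simp only [F, coe_product, Set.mem_prod, coe_Ioo, coe_Icc, Set.mem_Ioo, Set.mem_Icc,
      Fintype.coe_piFinset, Set.mem_pi]
    exact ⟨⟨hnh, hnhn⟩, abs_le.1 hdh, fun k _ => hjhat k⟩
  have hwalls : IsNowhereDense (⋃ p ∈ F, slopeWall n d j p) :=
    isNowhereDense_biUnion_finset fun p hp => isNowhereDense_slopeWall hgcd
      (mem_Ioo.1 (mem_product.1 hp).1).1 (mem_Ioo.1 (mem_product.1 hp).1).2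
  exact (hwalls.preimage_val (weightChamber_subset_closure_interior m)).mono
    (Set.preimage_mono hcover)

/-- Remark 6.1 (second assertion): if `gcd(n, d, j_1, …, j_m) = 1` then the set
of parabolic weights for which semistability can differ from stability is
nowhere dense in the space of admissible weight vectors. -/
theorem stmt_3 (n d : ℤ) (hn : 2 ≤ n) (m : ℕ) (hm : 1 ≤ m)
    (j : Fin m → ℤ) (hj : ∀ k, 0 < j k) (hsum : ∑ k, j k = n)
    (hgcd : ∀ h : ℤ, h ∣ n → h ∣ d → (∀ k, h ∣ j k) → IsUnit h)
    (Δ S : Set (Fin m → ℝ))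
    (hΔ : Δ = {α | StrictMono α ∧ ∀ k, 0 ≤ α k ∧ α k < 1})
    (hS : S = {α ∈ Δ | ∃ (nh dh : ℤ) (jhat : Fin m → ℤ),
        0 < nh ∧ nh < n ∧ (∀ k, 0 ≤ jhat k ∧ jhat k ≤ j k) ∧
        (∑ k, jhat k) = nh ∧
        ((dh : ℝ) + ∑ k, α k * (jhat k : ℝ)) / (nh : ℝ)
          = ((d : ℝ) + ∑ k, α k * (j k : ℝ)) / (n : ℝ)}) :
    IsNowhereDense (Subtype.val ⁻¹' S : Set Δ) :=
  stmt_3_general n d m j hgcd Δ S hΔ hS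
end

section
/- Fix integers $n \ge 2$, $d$, $m \ge 1$ and positive integers $j_1, \ldots, j_m$ with $j_1 + \cdots + j_m = n$. Let $\Delta = \{(\alpha_1, \ldots, \alpha_m) \in \mathbb{R}^m : 0 \le \alpha_1 < \alpha_2 < \cdots < \alpha_m < 1\}$, and let $S \subseteq \Delta$ be the set of those $(\alpha_1, \ldots, \alpha_m)$ for which there exist integers $\hat n, \hat d, \hat j_1, \ldots, \hat j_m$ with $0 < \hat n < n$, $0 \le \hat j_k \le j_k$ for all $k$, $\hat j_1 + \cdots + \hat j_m = \hat n$, and $(\hat d + \sum_{k=1}^m \alpha_k \hat j_k)/\hat n = (d + \sum_{k=1}^m \alpha_k j_k)/n$. If $j_{k_0} = 1$ for some $k_0 \in \{1, \ldots, m\}$, then $S$ is nowhere dense in $\Delta$. -/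
/-!
Every weight vector in `S` lies on a wall `{α | equalSlopeDegree n d j nh jh α ∈ ℤ}`; there
are finitely many admissible `(nh, jh)`, and each gives a locally finite family of parallel
hyperplanes, so the union `C` of the walls is closed. Raising `α k₀` keeps `α` in `Δ`, and
along that direction each wall function is affine with slope `nh / n - jh k₀`, which cannot
vanish because `j k₀ = 1` and `0 < nh < n`. So every such ray meets `C` in countably many
points, and `C` has empty interior in `Δ`.
-/

open Finset Filter Topology

theorem isNowhereDense_preimage_val_of_countable_ray {E : Type*} [AddCommGroup E]
    [TopologicalSpace E] [Module ℝ E] [ContinuousAdd E] [ContinuousSMul ℝ E]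
    {s C : Set E} (v : E) (hC : IsClosed C)
    (hs : ∀ x ∈ s, ∀ᶠ t in 𝓝[>] (0 : ℝ), x + t • v ∈ s)
    (hcount : ∀ x ∈ s, {t : ℝ | x + t • v ∈ C}.Countable) :
    IsNowhereDense (Subtype.val ⁻¹' C : Set s) := by
  rw [(hC.preimage continuous_subtype_val).isNowhereDense_iff, Set.eq_empty_iff_forall_notMem]
  intro x hx
  obtain ⟨U, hU, hUC⟩ := mem_nhds_subtype s x _ |>.1 (mem_interior_iff_mem_nhds.1 hx)
  have hray : Tendsto (fun t : ℝ => (x : E) + t • v) (𝓝[>] 0) (𝓝 (x : E)) :=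
    ((continuous_const.add (continuous_id.smul continuous_const)).tendsto' 0 (x : E)
      (by simp)).mono_left nhdsWithin_le_nhds
  have hev : ∀ᶠ t in 𝓝[>] (0 : ℝ), (x : E) + t • v ∈ C := by
    filter_upwards [hray hU, hs x x.2] with t htU hts
    exact hUC (a := ⟨_, hts⟩) htU
  obtain ⟨ε, hε, hεC⟩ := mem_nhdsGT_iff_exists_Ioo_subset.1 hev
  obtain ⟨t, htC, ht⟩ := ((hcount x x.2).dense_compl ℝ).exists_between hε
  exact htC (hεC ht)

theorem countable_setOf_add_mul_mem_range_intCast (a c : ℝ) (hc : c ≠ 0) :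
    {t : ℝ | a + t * c ∈ Set.range ((↑) : ℤ → ℝ)}.Countable := by
  refine (Set.countable_range fun z : ℤ => (z - a) / c).mono ?_
  rintro t ⟨z, hz⟩
  exact ⟨z, by field_simp; linarith⟩

theorem intCast_div_sub_intCast_ne_zero {a b : ℤ} (ha : 0 < a) (hab : a < b) (x : ℤ) :
    (a : ℝ) / b - x ≠ 0 := by
  have hb : (b : ℝ) ≠ 0 := by exact_mod_cast (ha.trans hab).ne'
  rw [div_sub' hb, div_ne_zero_iff]
  refine ⟨fun h => ?_, hb⟩
  have : a = b * x := by exact_mod_cast sub_eq_zero.1 h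
  rcases lt_trichotomy x 0 with hx | rfl | hx <;> nlinarith

def parabolicWeights (m : ℕ) : Set (Fin m → ℝ) :=
  {α | StrictMono α ∧ ∀ k, 0 ≤ α k ∧ α k < 1}

theorem eventually_add_smul_mem_parabolicWeights {m : ℕ} {α v : Fin m → ℝ}
    (hα : α ∈ parabolicWeights m) (hv : 0 ≤ v) :
    ∀ᶠ t in 𝓝[>] (0 : ℝ), α + t • v ∈ parabolicWeights m := by
  obtain ⟨hmono, hbound⟩ := hα
  have hpath : ∀ k, Tendsto (fun t : ℝ => α k + t * v k) (𝓝 0) (𝓝 (α k)) := fun k =>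
    (by fun_prop : Continuous fun t : ℝ => α k + t * v k).tendsto' 0 _ (by simp)
  -- the strict inequalities persist near `t = 0`; `0 ≤ α k` is preserved because `t • v ≥ 0`
  have hlt : ∀ᶠ t in 𝓝 (0 : ℝ), ∀ k k', k < k' → α k + t * v k < α k' + t * v k' :=
    eventually_all.2 fun k => eventually_all.2 fun k' => by
      by_cases hkk' : k < k'
      · filter_upwards [(hpath k).eventually_lt (hpath k') (hmono hkk')] with t ht _ using ht
      · exact .of_forall fun t h => absurd h hkk'
  have hlt_one : ∀ᶠ t in 𝓝 (0 : ℝ), ∀ k, α k + t * v k < 1 :=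
    eventually_all.2 fun k => (hpath k).eventually_lt_const (hbound k).2
  filter_upwards [nhdsWithin_le_nhds hlt, nhdsWithin_le_nhds hlt_one, self_mem_nhdsWithin]
    with t hlt hlt_one (ht : 0 < t)
  exact ⟨fun k k' h => hlt k k' h, fun k =>
    ⟨add_nonneg (hbound k).1 (mul_nonneg ht.le (hv k)), hlt_one k⟩⟩

/-- The degree `dh` solving `(dh + ∑ k, α k * jh k) / nh = (d + ∑ k, α k * j k) / n`. -/
noncomputable def equalSlopeDegree {m : ℕ} (n d : ℤ) (j : Fin m → ℤ) (nh : ℤ) (jh : Fin m → ℤ)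
    (α : Fin m → ℝ) : ℝ :=
  nh * ((d + ∑ k, α k * j k) / n) - ∑ k, α k * jh k

section equalSlopeDegree

variable {m : ℕ} (n d : ℤ) (j : Fin m → ℤ) (nh : ℤ) (jh : Fin m → ℤ)

theorem continuous_equalSlopeDegree : Continuous (equalSlopeDegree n d j nh jh) := by
  unfold equalSlopeDegree
  fun_prop

theorem equalSlopeDegree_eq_of_div_eq {α : Fin m → ℝ} {dh : ℤ} (hnh : nh ≠ 0)
    (h : (dh + ∑ k, α k * jh k) / nh = (d + ∑ k, α k * j k) / n) :
    equalSlopeDegree n d j nh jh α = dh := by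
  rw [equalSlopeDegree, ← h]
  field_simp
  ring

theorem equalSlopeDegree_add_smul_single (α : Fin m → ℝ) (k₀ : Fin m) (t : ℝ) :
    equalSlopeDegree n d j nh jh (α + t • Pi.single k₀ 1) =
      equalSlopeDegree n d j nh jh α + t * (nh * j k₀ / n - jh k₀) := by
  simp only [equalSlopeDegree, Pi.add_apply, Pi.smul_apply, smul_eq_mul, add_mul,
    Finset.sum_add_distrib, mul_assoc, ← Finset.mul_sum, Pi.single_apply, ite_mul, one_mul,
    zero_mul, Finset.sum_ite_eq', Finset.mem_univ, if_true]
  ring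

end equalSlopeDegree

theorem stmt_4_general (n d : ℤ) (m : ℕ)
    (j : Fin m → ℤ)
    (k₀ : Fin m) (hk₀ : j k₀ = 1)
    (Δ S : Set (Fin m → ℝ))
    (hΔ : Δ = {α | StrictMono α ∧ ∀ k, 0 ≤ α k ∧ α k < 1})
    (hS : S = {α ∈ Δ | ∃ (nh dh : ℤ) (jhat : Fin m → ℤ),
        0 < nh ∧ nh < n ∧ (∀ k, 0 ≤ jhat k ∧ jhat k ≤ j k) ∧
        (∑ k, jhat k) = nh ∧
        ((dh : ℝ) + ∑ k, α k * (jhat k : ℝ)) / (nh : ℝ)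
          = ((d : ℝ) + ∑ k, α k * (j k : ℝ)) / (n : ℝ)}) :
    IsNowhereDense (Subtype.val ⁻¹' S : Set Δ) := by
  subst hΔ
  set T : Set (ℤ × (Fin m → ℤ)) := Set.Ioo 0 n ×ˢ Set.univ.pi fun k => Set.Icc 0 (j k)
  set C := ⋃ p ∈ T, equalSlopeDegree n d j p.1 p.2 ⁻¹' Set.range ((↑) : ℤ → ℝ)
  have hT : T.Finite :=
    (Set.finite_Ioo 0 n).prod (Set.Finite.pi fun k => Set.finite_Icc 0 (j k))
  have hSC : S ⊆ C := by
    rw [hS]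
    rintro α ⟨-, nh, dh, jh, hnh, hnhn, hjh, -, h⟩
    exact Set.mem_biUnion (x := (nh, jh)) ⟨⟨hnh, hnhn⟩, fun k _ => hjh k⟩
      ⟨dh, (equalSlopeDegree_eq_of_div_eq n d j nh jh hnh.ne' h).symm⟩
  refine (isNowhereDense_preimage_val_of_countable_ray (Pi.single k₀ 1) ?_ ?_ ?_).mono
    (Set.preimage_mono hSC)
  · exact hT.isClosed_biUnion fun p _ =>
      Real.isClosed_range_intCast.preimage (continuous_equalSlopeDegree n d j p.1 p.2)
  · exact fun α hα =>
      eventually_add_smul_mem_parabolicWeights hα (Pi.single_nonneg.2 zero_le_one)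
  · intro α _
    simp only [C, Set.mem_iUnion, Set.ofPred_exists, Set.mem_preimage,
      equalSlopeDegree_add_smul_single, hk₀, Int.cast_one, mul_one]
    exact hT.countable.biUnion fun p hp => countable_setOf_add_mul_mem_range_intCast _ _
      (intCast_div_sub_intCast_ne_zero hp.1.1 hp.1.2 (p.2 k₀))

/-- Remark 6.1 (final assertion): if some multiplicity `j_{k₀}` equals 1 then
the set of parabolic weights for which semistability can differ from stability
is nowhere dense in the space of admissible weight vectors. -/
theorem stmt_4 (n d : ℤ) (hn : 2 ≤ n) (m : ℕ) (hm : 1 ≤ m)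
    (j : Fin m → ℤ) (hj : ∀ k, 0 < j k) (hsum : ∑ k, j k = n)
    (k₀ : Fin m) (hk₀ : j k₀ = 1)
    (Δ S : Set (Fin m → ℝ))
    (hΔ : Δ = {α | StrictMono α ∧ ∀ k, 0 ≤ α k ∧ α k < 1})
    (hS : S = {α ∈ Δ | ∃ (nh dh : ℤ) (jhat : Fin m → ℤ),
        0 < nh ∧ nh < n ∧ (∀ k, 0 ≤ jhat k ∧ jhat k ≤ j k) ∧
        (∑ k, jhat k) = nh ∧
        ((dh : ℝ) + ∑ k, α k * (jhat k : ℝ)) / (nh : ℝ)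
          = ((d : ℝ) + ∑ k, α k * (j k : ℝ)) / (n : ℝ)}) :
    IsNowhereDense (Subtype.val ⁻¹' S : Set Δ) :=
  stmt_4_general n d m j k₀ hk₀ Δ S hΔ hS
end

section
/- Let $g \ge 2$, $n \ge 3$ and $d$ be integers with $n/2 < d < n$. Then $\min\big\{\, n d_1 - n_1 d + n_1(n - n_1)(g-1) \;:\; n_1, d_1 \in \mathbb{Z},\ 0 < n_1 < n,\ n d_1 > n_1 d \,\big\} = (n - d) + (n-1)(g-1),$ and the minimum is attained at $(n_1, d_1) = (1, 1)$. -/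
/-!
With `δ = stratumCodim g n d`,
`δ(n₁, d₁) - δ(1, 1) = (n d₁ - n₁ d - (n - d)) + (g - 1)(n₁ - 1)(n - n₁ - 1)`.
The second summand vanishes at `n₁ = 1` and `n₁ = n - 1`, where integrality of
`n d₁ - n₁ d > 0` already gives `n d₁ - n₁ d ≥ n - d`, resp. `≥ d > n - d`.
For `2 ≤ n₁ ≤ n - 2` it is at least `n - 3`, which covers the possible deficit
`n - d - 1` of the first summand because `d ≥ 2`.
-/

def stratumCodim (g n d n₁ d₁ : ℤ) : ℤ :=
  n * d₁ - n₁ * d + n₁ * (n - n₁) * (g - 1)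

lemma stratumCodim_sub_stratumCodim_one_one (g n d n₁ d₁ : ℤ) :
    stratumCodim g n d n₁ d₁ - stratumCodim g n d 1 1
      = (n * d₁ - n₁ * d - (n - d)) + (g - 1) * ((n₁ - 1) * (n - n₁ - 1)) := by
  unfold stratumCodim
  ring

lemma sub_le_mul_sub_of_lt {n d d₁ : ℤ} (hn : 0 < n) (hd : 0 ≤ d) (h : d < n * d₁) :
    n - d ≤ n * d₁ - d := by
  have hd₁ : 0 < d₁ := pos_of_mul_pos_right (hd.trans_lt h) hn.le
  nlinarith

lemma le_mul_sub_sub_one_mul_of_lt {n d d₁ : ℤ} (hn : 0 ≤ n) (hdn : d ≤ n)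
    (h : (n - 1) * d < n * d₁) : d ≤ n * d₁ - (n - 1) * d := by
  have hd₁ : d ≤ d₁ := by
    by_contra! hlt
    nlinarith
  nlinarith

lemma add_sub_three_le_sub_one_mul_sub_one {a b : ℤ} (ha : 2 ≤ a) (hb : 2 ≤ b) :
    a + b - 3 ≤ (a - 1) * (b - 1) := by
  nlinarith [mul_nonneg (sub_nonneg.2 ha) (sub_nonneg.2 hb)]

lemma sub_le_slope_gap_add {n d n₁ d₁ : ℤ} (h₁ : 0 < n₁) (h₂ : n₁ < n)
    (hslope : n₁ * d < n * d₁) (hd₁ : n < 2 * d) (hd₂ : d < n) :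
    n - d ≤ (n * d₁ - n₁ * d) + (n₁ - 1) * (n - n₁ - 1) := by
  obtain rfl | hlow := (show 1 ≤ n₁ by omega).eq_or_lt
  · have := sub_le_mul_sub_of_lt (n := n) (d := d) (d₁ := d₁) (by omega) (by omega)
      (by simpa using hslope)
    simpa using this
  obtain hmid | rfl := (show n₁ ≤ n - 1 by omega).lt_or_eq
  · have := add_sub_three_le_sub_one_mul_sub_one (a := n₁) (b := n - n₁) (by omega) (by omega)
    linarith
  · have := le_mul_sub_sub_one_mul_of_lt (by omega) hd₂.le hslope
    nlinarith

lemma stratumCodim_one_one_le {g n d n₁ d₁ : ℤ} (hg : 2 ≤ g) (h₁ : 0 < n₁) (h₂ : n₁ < n)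
    (hslope : n₁ * d < n * d₁) (hd₁ : n < 2 * d) (hd₂ : d < n) :
    stratumCodim g n d 1 1 ≤ stratumCodim g n d n₁ d₁ := by
  have hgap := sub_le_slope_gap_add h₁ h₂ hslope hd₁ hd₂
  have hdiff := stratumCodim_sub_stratumCodim_one_one g n d n₁ d₁
  have hQ : 0 ≤ (n₁ - 1) * (n - n₁ - 1) := mul_nonneg (by omega) (by omega)
  have hgQ := le_mul_of_one_le_left hQ (show 1 ≤ g - 1 by omega)
  linarith

theorem stmt_8_general (g n d : ℤ) (hg : 2 ≤ g)
    (hd1 : n < 2 * d) (hd2 : d < n) :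
    IsLeast {x : ℤ | ∃ n₁ d₁ : ℤ, 0 < n₁ ∧ n₁ < n ∧ n₁ * d < n * d₁ ∧
        x = n * d₁ - n₁ * d + n₁ * (n - n₁) * (g - 1)}
      ((n - d) + (n - 1) * (g - 1)) ∧
    (n - d) + (n - 1) * (g - 1)
      = n * 1 - 1 * d + 1 * (n - 1) * (g - 1) := by
  have hvalue : (n - d) + (n - 1) * (g - 1) = stratumCodim g n d 1 1 := by
    unfold stratumCodim
    ring
  refine ⟨⟨⟨1, 1, one_pos, by omega, by omega, hvalue⟩, ?_⟩, hvalue⟩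
  rintro x ⟨n₁, d₁, h₁, h₂, hslope, rfl⟩
  rw [hvalue]
  exact stratumCodim_one_one_le hg h₁ h₂ hslope hd1 hd2

/-- Remark 3.4 made precise: for `g ≥ 2`, `n ≥ 3` and `n/2 < d < n`, the least
codimension `n d₁ - n₁ d + n₁(n-n₁)(g-1)` over pairs `(n₁, d₁)` with
`0 < n₁ < n` and `d₁/n₁ > d/n` is `(n-d) + (n-1)(g-1)`, attained at
`(n₁, d₁) = (1, 1)`. -/
theorem stmt_8 (g n d : ℤ) (hg : 2 ≤ g) (hn : 3 ≤ n)
    (hd1 : n < 2 * d) (hd2 : d < n) :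
    IsLeast {x : ℤ | ∃ n₁ d₁ : ℤ, 0 < n₁ ∧ n₁ < n ∧ n₁ * d < n * d₁ ∧
        x = n * d₁ - n₁ * d + n₁ * (n - n₁) * (g - 1)}
      ((n - d) + (n - 1) * (g - 1)) ∧
    (n - d) + (n - 1) * (g - 1)
      = n * 1 - 1 * d + 1 * (n - 1) * (g - 1) :=
  stmt_8_general g n d hg hd1 hd2
end
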